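/- In a binary tree-child phylogenetic network with n leaves, the number of reticulation nodes is at most n - 1. -/

import Mathlib

/-- A (directed) phylogenetic-network-like graph on a finite set of
natural-number labelled vertices. -/
structure PNet where
  verts : Finset ℕ
  adj : ℕ → ℕ → Prop
  adjDec : DecidableRel adj
  adj_mem : ∀ u v, adj u v → u ∈ verts ∧ v ∈ verts

attribute [instance] PNet.adjDec

namespace PNet

/-- In-degree of a vertex. -/
def indeg (N : PNet) (v : ℕ) : ℕ := (N.verts.filter fun u => N.adj u v).card

/-- Out-degree of a vertex. -/
def outdeg (N : PNet) (v : ℕ) : ℕ := (N.verts.filter fun w => N.adj v w).card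

/-- A leaf is a vertex of out-degree 0. -/
def IsLeaf (N : PNet) (v : ℕ) : Prop := v ∈ N.verts ∧ N.outdeg v = 0

/-- A reticulation node is a vertex of in-degree 2. -/
def IsRetic (N : PNet) (v : ℕ) : Prop := v ∈ N.verts ∧ N.indeg v = 2

/-- A root is a vertex of in-degree 0. -/
def IsRoot (N : PNet) (v : ℕ) : Prop := v ∈ N.verts ∧ N.indeg v = 0

/-- The digraph is acyclic. -/
def Acyclic (N : PNet) : Prop := ∀ v, ¬ Relation.TransGen N.adj v v

/-- A binary (rooted) phylogenetic network: acyclic, a root of in-degree 0 and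
out-degree 2 from which all vertices are reachable, and every other vertex is a
tree node (in 1, out 2), a reticulation node (in 2, out 1) or a leaf (in 1, out 0). -/
def IsBinary (N : PNet) : Prop :=
  N.Acyclic ∧ ∃ ρ, N.IsRoot ρ ∧ N.outdeg ρ = 2 ∧
    (∀ v ∈ N.verts, Relation.ReflTransGen N.adj ρ v) ∧
    (∀ v ∈ N.verts, v ≠ ρ →
      (N.indeg v = 1 ∧ N.outdeg v = 2) ∨ (N.indeg v = 2 ∧ N.outdeg v = 1) ∨
      (N.indeg v = 1 ∧ N.outdeg v = 0))

/-- Tree-child: every internal node has a child that is not a reticulation. -/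
def TreeChild (N : PNet) : Prop :=
  ∀ v ∈ N.verts, N.outdeg v ≠ 0 → ∃ c, N.adj v c ∧ N.indeg c ≠ 2

/-- Stack-free: no edge joins two reticulation nodes. -/
def StackFree (N : PNet) : Prop :=
  ∀ u v, N.adj u v → ¬ (N.indeg u = 2 ∧ N.indeg v = 2)

end PNet

/-!
Count edges twice. Summing in-degree minus out-degree over all vertices gives
`#reticulations + #leaves = #(out-degree-2 vertices) + 1`. On the other hand each
reticulation has two parents, and by the tree-child property a parent of out-degree `d`
has at most `d - 1` reticulation children, so `2 * #reticulations ≤ #(out-degree-2 vertices)`.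
Together, `2 * #reticulations + 1 ≤ #reticulations + #leaves`.
-/

namespace PNet

open Finset

variable (N : PNet)

def children (v : ℕ) : Finset ℕ := N.verts.filter (N.adj v)

def leaves : Finset ℕ := N.verts.filter fun v => N.outdeg v = 0

def retics : Finset ℕ := N.verts.filter fun v => N.indeg v = 2

def branching : Finset ℕ := N.verts.filter fun v => N.outdeg v = 2

theorem card_children (v : ℕ) : #(N.children v) = N.outdeg v := rfl

theorem sum_indeg_eq_sum_outdeg : ∑ v ∈ N.verts, N.indeg v = ∑ v ∈ N.verts, N.outdeg v := by
  simp only [indeg, outdeg, card_filter]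
  exact sum_comm

theorem sum_card_filter_children (P : ℕ → Prop) [DecidablePred P] :
    ∑ v ∈ N.verts, #((N.children v).filter P) = ∑ c ∈ N.verts.filter P, N.indeg c := by
  simp only [children, filter_filter, indeg, card_filter]
  rw [sum_comm, sum_filter]
  refine sum_congr rfl fun c _ => ?_
  split_ifs with hc <;> simp [hc]

variable {N}

theorem TreeChild.card_filter_retic_children_le (htc : N.TreeChild) {v : ℕ} (hv : v ∈ N.verts) :
    #((N.children v).filter fun c => N.indeg c = 2) ≤ N.outdeg v - 1 := by
  rcases eq_or_ne (N.outdeg v) 0 with h0 | h0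
  · have := card_filter_le (N.children v) fun c => N.indeg c = 2
    rw [card_children] at this
    omega
  obtain ⟨c, hvc, hc⟩ := htc v hv h0
  have hcmem : c ∈ N.children v := mem_filter.2 ⟨(N.adj_mem v c hvc).2, hvc⟩
  rw [← card_children, ← card_erase_of_mem hcmem]
  refine card_le_card fun x hx => ?_
  obtain ⟨hx, hx2⟩ := mem_filter.1 hx
  exact mem_erase.2 ⟨by rintro rfl; exact hc hx2, hx⟩

theorem TreeChild.sum_indeg_retics_le (htc : N.TreeChild) :
    ∑ c ∈ N.retics, N.indeg c ≤ ∑ v ∈ N.verts, (N.outdeg v - 1) := by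
  rw [retics, ← sum_card_filter_children]
  exact sum_le_sum fun v hv => htc.card_filter_retic_children_le hv

theorem IsBinary.outdeg_le_two (hbin : N.IsBinary) {v : ℕ} (hv : v ∈ N.verts) :
    N.outdeg v ≤ 2 := by
  obtain ⟨-, ρ, -, hρ, -, hclass⟩ := hbin
  rcases eq_or_ne v ρ with rfl | hvρ
  · exact hρ.le
  · rcases hclass v hv hvρ with ⟨-, h⟩ | ⟨-, h⟩ | ⟨-, h⟩ <;> omega

theorem IsBinary.card_retics_add_card_leaves (hbin : N.IsBinary) :
    #N.retics + #N.leaves = #N.branching + 1 := by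
  obtain ⟨-, ρ, ⟨hρV, hρin⟩, hρout, -, hclass⟩ := hbin
  -- checked separately on the root, tree nodes, reticulations and leaves
  have hbalance : ∀ v ∈ N.verts,
      N.indeg v + ((if N.outdeg v = 2 then 1 else 0) + if v = ρ then 1 else 0) =
        N.outdeg v + ((if N.indeg v = 2 then 1 else 0) + if N.outdeg v = 0 then 1 else 0) := by
    intro v hv
    rcases eq_or_ne v ρ with rfl | hvρ
    · simp [hρin, hρout]
    · rcases hclass v hv hvρ with ⟨h1, h2⟩ | ⟨h1, h2⟩ | ⟨h1, h2⟩ <;> simp [h1, h2, hvρ]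
  have := sum_congr rfl hbalance
  simp only [sum_add_distrib, sum_boole, Nat.cast_id, filter_eq', hρV, if_true, card_singleton,
    sum_indeg_eq_sum_outdeg] at this
  simp only [retics, leaves, branching]
  omega

theorem IsBinary.two_mul_card_retics_le (hbin : N.IsBinary) (htc : N.TreeChild) :
    2 * #N.retics ≤ #N.branching :=
  calc 2 * #N.retics = ∑ c ∈ N.retics, N.indeg c := by
        rw [mul_comm, ← smul_eq_mul, ← sum_const]
        exact (sum_congr rfl fun c hc => (mem_filter.1 hc).2).symm
    _ ≤ ∑ v ∈ N.verts, (N.outdeg v - 1) := htc.sum_indeg_retics_le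
    _ = #N.branching := by
        rw [branching, card_filter]
        refine sum_congr rfl fun v hv => ?_
        have := hbin.outdeg_le_two hv
        split_ifs <;> omega

end PNet

open PNet in
/-- In a binary tree-child phylogenetic network with `n` leaves, the number of
reticulation nodes is at most `n - 1`. -/
theorem stmt16 (N : PNet) (n r : ℕ) (hbin : N.IsBinary) (htc : N.TreeChild)
    (hn : n = (N.verts.filter fun v => N.outdeg v = 0).card)
    (hr : r = (N.verts.filter fun v => N.indeg v = 2).card) :
    r ≤ n - 1 := by
  have hbalance := hbin.card_retics_add_card_leaves
  have hretics := hbin.two_mul_card_retics_le htc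
  simp only [retics, leaves] at hbalance hretics
  omega
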